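/- arXiv:1212.6210 — 2 statements merged into one kernel-verified Lean document; each statement's English description precedes it below -/
import Mathlib

section
/- Define L(t) = (1/2)·arcosh(p₁(t)/p₂(t)) where p₁(t) = 1 + 8t² + 21t⁴ - 2t⁶ and p₂(t) = 2t²(1+t²)². Then L is strictly decreasing on (0,1]. -/
noncomputable def arcosh (x : ℝ) : ℝ := Real.log (x + Real.sqrt (x^2 - 1))

noncomputable def L (t : ℝ) : ℝ :=
  (1/2) * arcosh ((1 + 8*t^2 + 21*t^4 - 2*t^6) / (2*t^2*(1+t^2)^2))

lemma arcosh_strictMono {x y : ℝ} (hx : 1 ≤ x) (hxy : x < y) : arcosh x < arcosh y := by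
  unfold arcosh
  apply Real.log_lt_log
  · have := Real.sqrt_nonneg (x^2 - 1); linarith
  · have h1 : Real.sqrt (x^2 - 1) ≤ Real.sqrt (y^2 - 1) := by
      apply Real.sqrt_le_sqrt; nlinarith
    linarith

lemma key (a b : ℝ) (ha : 0 < a) (hab : a < b) :
    (1 + 8*b + 21*b^2 - 2*b^3) * (2*a*(1+a)^2) <
      (1 + 8*a + 21*a^2 - 2*a^3) * (2*b*(1+b)^2) := by
  have hb : 0 < b := lt_trans ha hab
  have hbr : (0:ℝ) < 25*a^2*b^2 + 10*a^2*b + 10*a*b^2 - 5*a*b + a^2 + b^2 + a*b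
      + 2*a + 2*b + 1 := by
    nlinarith [sq_nonneg (5*a*b - 1), mul_pos ha hb, mul_pos (mul_pos ha hb) (mul_pos ha hb),
      mul_pos (mul_pos ha ha) hb, mul_pos ha (mul_pos hb hb)]
  nlinarith [mul_pos (sub_pos.2 hab) hbr]

theorem stmt_4 : StrictAntiOn L (Set.Ioc (0:ℝ) 1) := by
  intro s hs t ht hst
  obtain ⟨hs0, hs1⟩ := hs
  obtain ⟨ht0, ht1⟩ := ht
  have hds : (0:ℝ) < 2*s^2*(1+s^2)^2 := by positivity
  have hdt : (0:ℝ) < 2*t^2*(1+t^2)^2 := by positivity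
  unfold L
  have h1 : (1:ℝ) ≤ (1 + 8*t^2 + 21*t^4 - 2*t^6) / (2*t^2*(1+t^2)^2) := by
    rw [le_div_iff₀ hdt]
    have hu : t^2 ≤ 1 := by nlinarith
    nlinarith [mul_nonneg (mul_nonneg (sq_nonneg t) (sq_nonneg t)) (sub_nonneg.2 hu),
      sq_nonneg t, sq_nonneg (t^2)]
  have h2 : (1 + 8*t^2 + 21*t^4 - 2*t^6) / (2*t^2*(1+t^2)^2) <
      (1 + 8*s^2 + 21*s^4 - 2*s^6) / (2*s^2*(1+s^2)^2) := by
    rw [div_lt_div_iff₀ hdt hds]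
    have := key (s^2) (t^2) (by positivity) (by nlinarith)
    nlinarith [this]
  have := arcosh_strictMono h1 h2
  linarith
end

section
/- Define β(x,t) = (1/L(t))·arccos(cosh(x·L(t))/cosh(L(t))) for x ∈ [0,1] and t ∈ (0,1), where L(t) = (1/2)·arcosh((1+8t²+21t⁴-2t⁶)/(2t²(1+t²)²)). Then for fixed t ∈ (0,1), the mixed partial ∂²β/∂x∂t is negative for all x ∈ (0,1). -/
noncomputable def β (x t : ℝ) : ℝ :=
  (1 / L t) * Real.arccos (Real.cosh (x * L t) / Real.cosh (L t))

open Real Set Topology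

noncomputable def coshTwoL (t : ℝ) : ℝ :=
  (1 + 8*t^2 + 21*t^4 - 2*t^6) / (2*t^2*(1+t^2)^2)

theorem L_eq_half_arcosh : L = fun t => 1 / 2 * Real.arcosh (coshTwoL t) := rfl

theorem one_lt_coshTwoL {t : ℝ} (h0 : 0 < t) (h1 : t < 1) : 1 < coshTwoL t := by
  rw [coshTwoL, one_lt_div (by positivity)]
  nlinarith [pow_le_pow_of_le_one h0.le h1.le (by norm_num : 4 ≤ 6), pow_pos h0 4, pow_pos h0 2]

theorem hasDerivAt_coshTwoL {t : ℝ} (ht : t ≠ 0) :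
    HasDerivAt coshTwoL (-(1 + 3*t^2 - 5*t^4 + 25*t^6) / (t*(1+t^2))^3) t := by
  have hq : 2*t^2*(1+t^2)^2 ≠ 0 := by positivity
  have hnum : HasDerivAt (fun t : ℝ => 1 + 8*t^2 + 21*t^4 - 2*t^6)
      (16*t + 84*t^3 - 12*t^5) t :=
    ((((hasDerivAt_pow 2 t).const_mul 8).const_add 1).add
      ((hasDerivAt_pow 4 t).const_mul 21)).sub ((hasDerivAt_pow 6 t).const_mul 2)
      |>.congr_deriv (by norm_num; ring)
  have hden : HasDerivAt (fun t : ℝ => 2*t^2*(1+t^2)^2) (4*t*(1+t^2)*(1+3*t^2)) t :=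
    ((hasDerivAt_pow 2 t).const_mul 2).mul (((hasDerivAt_pow 2 t).const_add 1).pow 2)
      |>.congr_deriv (by norm_num; ring)
  refine (hnum.div hden hq).congr_deriv ?_
  field_simp
  ring

theorem L_pos {t : ℝ} (h0 : 0 < t) (h1 : t < 1) : 0 < L t := by
  rw [L_eq_half_arcosh]
  exact mul_pos one_half_pos (arcosh_pos (one_lt_coshTwoL h0 h1))

theorem exists_hasDerivAt_L_neg {t : ℝ} (h0 : 0 < t) (h1 : t < 1) :
    ∃ l' < 0, HasDerivAt L l' t := by
  have hw := one_lt_coshTwoL h0 h1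
  rw [L_eq_half_arcosh]
  refine ⟨_, ?_, ((Real.hasDerivAt_arcosh hw).comp t (hasDerivAt_coshTwoL h0.ne')).const_mul _⟩
  have hsqrt : 0 < √(coshTwoL t ^ 2 - 1) := Real.sqrt_pos.2 (by nlinarith)
  -- `1 + 3u - 5u² + 25u³ > 0` for `u ≥ 0`, since `25u² - 5u + 3` has negative discriminant
  have hpoly : 0 < 1 + 3*t^2 - 5*t^4 + 25*t^6 := by
    nlinarith [sq_nonneg (5*t^2 - 1/2), pow_pos h0 2, pow_pos h0 4]
  exact mul_neg_of_pos_of_neg one_half_pos <| mul_neg_of_pos_of_neg (inv_pos.2 hsqrt) <|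
    div_neg_of_neg_of_pos (by linarith) (by positivity)

theorem cosh_mul_lt_cosh {x l : ℝ} (hx : |x| < 1) (hl : l ≠ 0) : cosh (x * l) < cosh l :=
  cosh_lt_cosh.2 (by rw [abs_mul]; exact mul_lt_of_lt_one_left (abs_pos.2 hl) hx)

theorem cosh_sq_sub_cosh_mul_sq_pos {x l : ℝ} (hx : |x| < 1) (hl : l ≠ 0) :
    0 < cosh l ^ 2 - cosh (x * l) ^ 2 :=
  sub_pos.2 (pow_lt_pow_left₀ (cosh_mul_lt_cosh hx hl) (cosh_pos _).le two_ne_zero)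

theorem strictMonoOn_mul_cosh_div_sinh :
    StrictMonoOn (fun u => u * cosh u / sinh u) (Ioi 0) := by
  apply strictMonoOn_of_deriv_pos (convex_Ioi 0)
  · exact ((continuous_id.mul continuous_cosh).continuousOn).div continuous_sinh.continuousOn
      fun u hu => (sinh_pos_iff.2 hu).ne'
  · intro u hu
    rw [interior_Ioi] at hu
    have hS : 0 < sinh u := sinh_pos_iff.2 hu
    have hd : HasDerivAt (fun u => u * cosh u / sinh u)
        (((1 * cosh u + u * sinh u) * sinh u - u * cosh u * cosh u) / sinh u ^ 2) u :=
      ((hasDerivAt_id u).mul (hasDerivAt_cosh u)).div (hasDerivAt_sinh u) hS.ne'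
    rw [hd.deriv]
    apply div_pos _ (pow_pos hS 2)
    -- the numerator is `cosh u sinh u - u`, and `u < sinh u ≤ cosh u sinh u`
    nlinarith [cosh_sq_sub_sinh_sq u, self_lt_sinh_iff.2 hu, one_le_cosh u,
      mul_le_mul_of_nonneg_right (one_le_cosh u) hS.le]

theorem mul_cosh_mul_sinh_lt {x l : ℝ} (h0 : 0 < x) (h1 : x < 1) (hl : 0 < l) :
    x * cosh (x * l) * sinh l < sinh (x * l) * cosh l := by
  have hxl : 0 < x * l := by positivity
  have hmono := strictMonoOn_mul_cosh_div_sinh hxl (mem_Ioi.2 hl) (by nlinarith)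
  rw [div_lt_div_iff₀ (sinh_pos_iff.2 hxl) (sinh_pos_iff.2 hl)] at hmono
  nlinarith

noncomputable def betaSlope (x l : ℝ) : ℝ :=
  -sinh (x * l) / √(cosh l ^ 2 - cosh (x * l) ^ 2)

theorem hasDerivAt_arccos_cosh_mul {x l : ℝ} (hx : |x| < 1) (hl : l ≠ 0) :
    HasDerivAt (fun y => 1 / l * arccos (cosh (y * l) / cosh l)) (betaSlope x l) x := by
  have hC := cosh_pos l
  have hlt := cosh_mul_lt_cosh hx hl
  have hD := cosh_sq_sub_cosh_mul_sq_pos hx hl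
  have hr0 : 0 < cosh (x * l) / cosh l := div_pos (cosh_pos _) hC
  have hr1 : cosh (x * l) / cosh l < 1 := (div_lt_one hC).2 hlt
  have hinner : HasDerivAt (fun y => cosh (y * l) / cosh l) (sinh (x * l) * l / cosh l) x := by
    simpa using (((hasDerivAt_id x).mul_const l).cosh).div_const (cosh l)
  refine (((hasDerivAt_arccos (by linarith) hr1.ne).comp x hinner).const_mul (1 / l)).congr_deriv ?_
  have hre : 1 - (cosh (x * l) / cosh l) ^ 2 = (cosh l ^ 2 - cosh (x * l) ^ 2) / cosh l ^ 2 := by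
    field_simp
  rw [hre, sqrt_div hD.le, sqrt_sq hC.le, betaSlope]
  have := sqrt_pos.2 hD
  field_simp

theorem hasDerivAt_betaSlope {x l : ℝ} (hx : |x| < 1) (hl : l ≠ 0) :
    HasDerivAt (betaSlope x)
      (sinh l * (sinh (x * l) * cosh l - x * cosh (x * l) * sinh l) /
        ((cosh l ^ 2 - cosh (x * l) ^ 2) * √(cosh l ^ 2 - cosh (x * l) ^ 2))) l := by
  have hD := cosh_sq_sub_cosh_mul_sq_pos hx hl
  have hB := sqrt_pos.2 hD
  have hxl : HasDerivAt (fun l => x * l) x l := by simpa using (hasDerivAt_id l).const_mul x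
  have hDd : HasDerivAt (fun l => cosh l ^ 2 - cosh (x * l) ^ 2)
      (2 * cosh l * sinh l - 2 * cosh (x * l) * (sinh (x * l) * x)) l :=
    ((hasDerivAt_cosh l).pow 2).sub (hxl.cosh.pow 2) |>.congr_deriv (by norm_num)
  refine (hxl.sinh.neg.div (hDd.sqrt hD.ne') hB.ne').congr_deriv ?_
  rw [sq_sqrt hD.le]
  field_simp
  rw [Pi.neg_apply, sq_sqrt hD.le]
  linear_combination x * cosh (x * l) * (cosh_sq_sub_sinh_sq (x * l) - cosh_sq_sub_sinh_sq l)

theorem stmt_12 : ∀ x ∈ Set.Ioo (0:ℝ) 1, ∀ t ∈ Set.Ioo (0:ℝ) 1,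
    deriv (fun s => deriv (fun y => β y s) x) t < 0 := by
  rintro x ⟨hx0, hx1⟩ t ⟨ht0, ht1⟩
  have hx : |x| < 1 := abs_lt.2 ⟨by linarith, hx1⟩
  have hβx : (fun s => deriv (fun y => β y s) x) =ᶠ[𝓝 t] betaSlope x ∘ L := by
    filter_upwards [Ioo_mem_nhds ht0 ht1] with s hs
    exact (hasDerivAt_arccos_cosh_mul hx (L_pos hs.1 hs.2).ne').deriv
  have hl := L_pos ht0 ht1
  have hD := cosh_sq_sub_cosh_mul_sq_pos hx hl.ne'
  obtain ⟨l', hl'_neg, hL⟩ := exists_hasDerivAt_L_neg ht0 ht1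
  rw [hβx.deriv_eq, ((hasDerivAt_betaSlope hx hl.ne').comp t hL).deriv]
  refine mul_neg_of_pos_of_neg (div_pos (mul_pos (sinh_pos_iff.2 hl) ?_) ?_) hl'_neg
  · exact sub_pos.2 (mul_cosh_mul_sinh_lt hx0 hx1 hl)
  · exact mul_pos hD (sqrt_pos.2 hD)
end
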